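/- Let D, B ⊆ R^n be compact subsets with B ∈ Lip(n, M, L). Then the set {x ∈ R^n : (x + D) ∩ B ≠ ∅} is Lebesgue measurable and Vol{x ∈ R^n : (x + D) ∩ B ≠ ∅} ≤ C(D, n) · M (L+1)^{n−1}, where C(D, n) depends only on D and n. -/

import Mathlib

open Set MeasureTheory

/-- The unit cube `[0,1]^m` in `R^m` (with the Euclidean norm). -/
def unitCube (m : ℕ) : Set (EuclideanSpace ℝ (Fin m)) := {v | ∀ i, v i ∈ Set.Icc (0 : ℝ) 1}

/-- `B ∈ Lip(n, M, L)`: `B ⊆ R^n` is covered by the images of `M` maps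
`Φ : [0,1]^{n-1} → R^n`, each satisfying the Lipschitz condition `|Φ(v) - Φ(w)| ≤ L|v - w|`
with respect to the Euclidean norms. (For `n = 1`, `[0,1]⁰` is a single point, so these
are the sets with at most `M` elements.) -/
def InLip (n M : ℕ) (L : ℝ) (B : Set (EuclideanSpace ℝ (Fin n))) : Prop :=
  ∃ Φ : Fin M → (EuclideanSpace ℝ (Fin (n - 1)) → EuclideanSpace ℝ (Fin n)),
    (∀ i, ∀ v ∈ unitCube (n - 1), ∀ w ∈ unitCube (n - 1),
      ‖Φ i v - Φ i w‖ ≤ L * ‖v - w‖) ∧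
    B ⊆ ⋃ i, Φ i '' unitCube (n - 1)

open Metric Pointwise

/-! The set is the Minkowski difference `B - D`, hence compact. Cutting `[0,1]^{n-1}` into
`N^{n-1}` cells of side `1/N` with `N = ⌈L⌉`, each `L`-Lipschitz image is covered by
`N^{n-1}` balls of radius `√(n-1)`, so with `D ⊆ closedBall 0 R` the difference `B - D` is
covered by `M N^{n-1} ≤ M (L+1)^{n-1}` balls of radius `√(n-1) + R`. -/

lemma exists_fin_abs_sub_div_le {N : ℕ} (hN : 0 < N) {t : ℝ} (ht : t ∈ Icc (0 : ℝ) 1) :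
    ∃ k : Fin N, |t - k / N| ≤ 1 / N := by
  have hN' : (0 : ℝ) < N := by exact_mod_cast hN
  refine ⟨⟨min ⌊t * N⌋₊ (N - 1), by omega⟩, ?_⟩
  set k := min ⌊t * N⌋₊ (N - 1)
  have hk_le : (k : ℝ) ≤ t * N :=
    (Nat.cast_le.mpr (min_le_left _ _)).trans (Nat.floor_le (by nlinarith [ht.1]))
  have hk_ge : t * N ≤ k + 1 := by
    rcases min_choice ⌊t * N⌋₊ (N - 1) with h | h <;> simp only [k, h]
    · exact (Nat.lt_floor_add_one _).le
    · rw [Nat.cast_sub hN, Nat.cast_one]; nlinarith [ht.2]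
  rw [abs_le, div_eq_mul_inv, div_eq_mul_inv]
  constructor <;> nlinarith [mul_inv_cancel₀ hN'.ne', inv_pos.mpr hN']

noncomputable def cubeGrid (m N : ℕ) (k : Fin m → Fin N) : EuclideanSpace ℝ (Fin m) :=
  WithLp.toLp 2 fun j => (k j : ℝ) / N

lemma cubeGrid_mem_unitCube {m N : ℕ} (k : Fin m → Fin N) : cubeGrid m N k ∈ unitCube m :=
  fun j => ⟨div_nonneg (Nat.cast_nonneg _) (Nat.cast_nonneg _),
    div_le_one_of_le₀ (by exact_mod_cast (k j).isLt.le) (Nat.cast_nonneg _)⟩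

lemma unitCube_subset_iUnion_closedBall_cubeGrid {m N : ℕ} (hN : 0 < N) :
    unitCube m ⊆ ⋃ k, closedBall (cubeGrid m N k) (√m / N) := by
  intro v hv
  choose k hk using fun j => exists_fin_abs_sub_div_le hN (hv j)
  refine mem_iUnion.mpr ⟨k, ?_⟩
  rw [mem_closedBall, EuclideanSpace.dist_eq]
  calc √(∑ j, dist (v j) (cubeGrid m N k j) ^ 2) ≤ √(∑ _j : Fin m, (1 / N : ℝ) ^ 2) := by
        gcongr with j
        exact hk j
    _ = √m / N := by
        simp [Real.sqrt_mul, Real.sqrt_sq, div_eq_mul_inv]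

lemma image_unitCube_subset_iUnion_closedBall {m N : ℕ} {E : Type*} [SeminormedAddCommGroup E]
    {L : ℝ} {Φ : EuclideanSpace ℝ (Fin m) → E}
    (hΦ : ∀ v ∈ unitCube m, ∀ w ∈ unitCube m, ‖Φ v - Φ w‖ ≤ L * ‖v - w‖)
    (hL : 0 ≤ L) (hN : 0 < N) (hLN : L ≤ N) :
    Φ '' unitCube m ⊆ ⋃ k, closedBall (Φ (cubeGrid m N k)) √m := by
  rintro _ ⟨v, hv, rfl⟩
  obtain ⟨k, hk⟩ := mem_iUnion.mp (unitCube_subset_iUnion_closedBall_cubeGrid hN hv)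
  refine mem_iUnion.mpr ⟨k, ?_⟩
  rw [mem_closedBall, dist_eq_norm] at hk ⊢
  have hN' : (0 : ℝ) < N := by exact_mod_cast hN
  calc ‖Φ v - Φ (cubeGrid m N k)‖ ≤ L * ‖v - cubeGrid m N k‖ :=
        hΦ v hv _ (cubeGrid_mem_unitCube k)
    _ ≤ L * (√m / N) := by gcongr
    _ ≤ √m := by
        rw [mul_div_left_comm]
        exact mul_le_of_le_one_right (Real.sqrt_nonneg _) ((div_le_one hN').mpr hLN)

lemma InLip.exists_subset_iUnion_closedBall {n M N : ℕ} {L : ℝ}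
    {B : Set (EuclideanSpace ℝ (Fin n))} (hB : InLip n M L B) (hL : 0 ≤ L) (hN : 0 < N)
    (hLN : L ≤ N) :
    ∃ x : Fin M × (Fin (n - 1) → Fin N) → EuclideanSpace ℝ (Fin n),
      B ⊆ ⋃ p, closedBall (x p) √(n - 1 : ℕ) := by
  obtain ⟨Φ, hΦ, hBΦ⟩ := hB
  refine ⟨fun p => Φ p.1 (cubeGrid (n - 1) N p.2), hBΦ.trans ?_⟩
  rw [iUnion_prod']
  exact iUnion_mono fun i => image_unitCube_subset_iUnion_closedBall (hΦ i) hL hN hLN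

lemma setOf_image_add_inter_nonempty_eq_sub {G : Type*} [AddCommGroup G] (B D : Set G) :
    {x | ((x + ·) '' D ∩ B).Nonempty} = B - D := by
  ext x
  simp only [mem_ofPred_eq, Set.Nonempty, mem_inter_iff, mem_image, mem_sub]
  constructor
  · rintro ⟨_, ⟨d, hd, rfl⟩, hb⟩
    exact ⟨x + d, hb, d, hd, add_sub_cancel_right x d⟩
  · rintro ⟨b, hb, d, hd, rfl⟩
    exact ⟨b, ⟨d, hd, sub_add_cancel b d⟩, hb⟩

lemma sub_subset_iUnion_closedBall {ι E : Type*} [SeminormedAddCommGroup E] {B D : Set E}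
    {x : ι → E} {r R : ℝ} (hB : B ⊆ ⋃ i, closedBall (x i) r) (hD : D ⊆ closedBall 0 R) :
    B - D ⊆ ⋃ i, closedBall (x i) (r + R) := by
  rintro _ ⟨b, hb, d, hd, rfl⟩
  obtain ⟨i, hi⟩ := mem_iUnion.mp (hB hb)
  refine mem_iUnion.mpr ⟨i, ?_⟩
  have hd := mem_closedBall_zero_iff.mp (hD hd)
  rw [mem_closedBall, dist_eq_norm] at hi
  rw [mem_closedBall, dist_eq_norm]
  calc ‖b - d - x i‖ = ‖(b - x i) - d‖ := by rw [sub_right_comm]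
    _ ≤ ‖b - x i‖ + ‖d‖ := norm_sub_le _ _
    _ ≤ r + R := add_le_add hi hd

lemma measureReal_le_card_mul_of_subset_iUnion_closedBall {ι E : Type*} [Fintype ι]
    [NormedAddCommGroup E] [ProperSpace E] [MeasurableSpace E] [BorelSpace E]
    (μ : Measure E) [μ.IsAddHaarMeasure] {s : Set E} {x : ι → E} {r : ℝ}
    (hs : s ⊆ ⋃ i, closedBall (x i) r) :
    μ.real s ≤ Fintype.card ι * μ.real (closedBall 0 r) :=
  calc μ.real s ≤ μ.real (⋃ i, closedBall (x i) r) :=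
        measureReal_mono hs
          (Bornology.isBounded_iUnion.mpr fun _ => isBounded_closedBall).measure_lt_top.ne
    _ ≤ ∑ i, μ.real (closedBall (x i) r) := measureReal_iUnion_fintype_le _
    _ = Fintype.card ι * μ.real (closedBall 0 r) := by
        simp [measureReal_def, Measure.addHaar_closedBall_center]

theorem stmt10_general (n : ℕ)
    (D : Set (EuclideanSpace ℝ (Fin n))) (hD : IsCompact D) :
    ∃ C : ℝ, ∀ M : ℕ, 0 < M → ∀ L : ℝ, 0 < L →
      ∀ B : Set (EuclideanSpace ℝ (Fin n)), IsCompact B → InLip n M L B →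
        MeasurableSet {x : EuclideanSpace ℝ (Fin n) | (((x + ·) '' D) ∩ B).Nonempty} ∧
        (volume {x : EuclideanSpace ℝ (Fin n) | (((x + ·) '' D) ∩ B).Nonempty}).toReal ≤
          C * M * (L + 1) ^ (n - 1) := by
  obtain ⟨R, hDR⟩ := hD.isBounded.subset_closedBall 0
  refine ⟨volume.real (closedBall (0 : EuclideanSpace ℝ (Fin n)) (√(n - 1 : ℕ) + R)),
    fun M _ L hL B hB hBLip => ?_⟩
  rw [setOf_image_add_inter_nonempty_eq_sub]
  refine ⟨?_, ?_⟩
  · rw [← sub_image_prod]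
    exact ((hB.prod hD).image continuous_sub).measurableSet
  obtain ⟨x, hBx⟩ :=
    hBLip.exists_subset_iUnion_closedBall hL.le (Nat.ceil_pos.mpr hL) (Nat.le_ceil L)
  calc volume.real (B - D)
      ≤ (M * ⌈L⌉₊ ^ (n - 1) : ℕ) *
          volume.real (closedBall (0 : EuclideanSpace ℝ (Fin n)) (√(n - 1 : ℕ) + R)) := by
        simpa using measureReal_le_card_mul_of_subset_iUnion_closedBall volume
          (sub_subset_iUnion_closedBall hBx hDR)
    _ ≤ _ := by
        push_cast
        rw [mul_comm, ← mul_assoc]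
        gcongr
        exact (Nat.ceil_lt_add_one hL.le).le

/-- Lemma 4.1 (ii): for compact sets `D`, `B ⊆ R^n` with
`B ∈ Lip(n, M, L)`, the set `{x ∈ R^n : (x + D) ∩ B ≠ ∅}` is measurable and its volume is
at most `C(D, n) · M (L+1)^{n-1}`. -/
theorem stmt10 (n : ℕ) (hn : 0 < n)
    (D : Set (EuclideanSpace ℝ (Fin n))) (hD : IsCompact D) :
    ∃ C : ℝ, ∀ M : ℕ, 0 < M → ∀ L : ℝ, 0 < L →
      ∀ B : Set (EuclideanSpace ℝ (Fin n)), IsCompact B → InLip n M L B →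
        MeasurableSet {x : EuclideanSpace ℝ (Fin n) | (((x + ·) '' D) ∩ B).Nonempty} ∧
        (volume {x : EuclideanSpace ℝ (Fin n) | (((x + ·) '' D) ∩ B).Nonempty}).toReal ≤
          C * M * (L + 1) ^ (n - 1) :=
  stmt10_general n D hD
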